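/- arXiv:2205.13444 — 3 statements merged into one kernel-verified Lean document; each statement's English description precedes it below -/
import Mathlib

section
/- Let N be a natural number, V ∈ ℝ^N, ε > 0, and λ ≥ 0. Define the PKD step x*(V) ∈ ℝ^N coordinatewise by x*_i = ε if V_i < −λ, x*_i = −ε if V_i > λ, and x*_i = 0 if |V_i| ≤ λ. Then every coordinate of x*(V) lies in [−ε, ε], and for every x ∈ ℝ^N with all coordinates in [−ε, ε], V·x*(V) + λ·‖x*(V)‖₁ ≤ V·x + λ·‖x‖₁. -/
/-- The PKD step: `x*_i = ε` if `V_i < -λ`, `x*_i = -ε` if `V_i > λ`, and `x*_i = 0`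
if `|V_i| ≤ λ`. -/
noncomputable def pkdStep {N : ℕ} (lam eps : ℝ) (V : Fin N → ℝ) : Fin N → ℝ :=
  fun i => if V i < -lam then eps else if lam < V i then -eps else 0

/-! The objective is separable, so it suffices to minimize `v x + λ|x|` over `|x| ≤ ε` for a
single coordinate. Since `v x ≥ -|v| |x|`, this is at least `(λ - |v|) |x|`, which over
`|x| ≤ ε` is smallest at `|x| = ε` when `|v| > λ` and at `x = 0` otherwise; the PKD step
attains that bound by giving `x` the sign opposite to `v`. -/

theorem sub_abs_mul_abs_le_mul_add_mul_abs (v lam x : ℝ) :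
    (lam - |v|) * |x| ≤ v * x + lam * |x| := by
  have h := neg_abs_le (v * x)
  rw [abs_mul] at h
  linarith

section

variable {N : ℕ} (V : Fin N → ℝ) (lam eps : ℝ)

theorem pkdStep_mem_Icc (heps : 0 ≤ eps) (i : Fin N) :
    pkdStep lam eps V i ∈ Set.Icc (-eps) eps := by
  unfold pkdStep
  split_ifs <;> constructor <;> linarith

theorem pkdStep_apply_objective_le (hlam : 0 ≤ lam) (i : Fin N) {x : ℝ} (hx : |x| ≤ eps) :
    V i * pkdStep lam eps V i + lam * |pkdStep lam eps V i| ≤ V i * x + lam * |x| := by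
  refine le_trans ?_ (sub_abs_mul_abs_le_mul_add_mul_abs (V i) lam x)
  have heps : 0 ≤ eps := (abs_nonneg x).trans hx
  unfold pkdStep
  split_ifs with hneg hpos
  · rw [abs_of_nonneg heps, abs_of_neg (by linarith : V i < 0)]
    nlinarith
  · rw [abs_neg, abs_of_nonneg heps, abs_of_pos (by linarith : 0 < V i)]
    nlinarith
  · have hV : |V i| ≤ lam := abs_le.mpr ⟨by linarith, by linarith⟩
    simp only [mul_zero, abs_zero, add_zero]
    exact mul_nonneg (by linarith) (abs_nonneg x)

end

/-- Theorem 2 of the paper: the PKD step is a global minimizer of the ℓ1-regularized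
linear objective `V·x + λ‖x‖₁` over the box `[-ε, ε]^N`. -/
theorem pkdStep_is_minimizer {N : ℕ} (V : Fin N → ℝ) (eps lam : ℝ)
    (heps : 0 < eps) (hlam : 0 ≤ lam) :
    (∀ i, pkdStep lam eps V i ∈ Set.Icc (-eps) eps) ∧
    ∀ x : Fin N → ℝ, (∀ i, x i ∈ Set.Icc (-eps) eps) →
      (∑ i, V i * pkdStep lam eps V i) + lam * ∑ i, |pkdStep lam eps V i| ≤
        (∑ i, V i * x i) + lam * ∑ i, |x i| := by
  refine ⟨pkdStep_mem_Icc V lam eps heps.le, fun x hx => ?_⟩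
  simp only [Finset.mul_sum, ← Finset.sum_add_distrib]
  exact Finset.sum_le_sum fun i _ =>
    pkdStep_apply_objective_le V lam eps hlam i (abs_le.mpr (hx i))
end

section
/- Let N be a natural number, g ∈ ℝ^N with ‖g‖∞ > λ for some λ > 0, ε > 0, and K a positive natural number. Let H : ℝ^N → ℝ be the affine function H(θ) = g·θ + c for some c ∈ ℝ, define the PKD step x*(g) ∈ ℝ^N coordinatewise by x*_i = ε if g_i < −λ, x*_i = −ε if g_i > λ, and x*_i = 0 if |g_i| ≤ λ, and set θ^k = θ^0 + k·x*(g) for k = 0, …, K. Then H(θ^0) − H(θ^K) ≥ K·λ·ε > 0. -/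
/-!
Along the ray `θ₀ + t • x*` the affine objective changes by `t * (g ⬝ᵥ x*)`. Every term
`g i * x*_i` of this dot product is nonpositive, since `x*` moves each coordinate against the sign
of `g i`, and at a coordinate with `|g i| > λ` it is at most `-(λ * ε)`.
-/

open Matrix

lemma mul_pkdStep_nonpos {N : ℕ} {lam eps : ℝ} (hlam : 0 ≤ lam) (heps : 0 ≤ eps)
    (V : Fin N → ℝ) (i : Fin N) : V i * pkdStep lam eps V i ≤ 0 := by
  unfold pkdStep
  split_ifs with hneg hpos
  · exact mul_nonpos_of_nonpos_of_nonneg (by linarith) heps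
  · exact mul_nonpos_of_nonneg_of_nonpos (by linarith) (neg_nonpos.2 heps)
  · rw [mul_zero]

lemma mul_pkdStep_le_neg_mul {N : ℕ} {lam eps : ℝ} (heps : 0 ≤ eps)
    {V : Fin N → ℝ} {i : Fin N} (hi : lam < |V i|) :
    V i * pkdStep lam eps V i ≤ -(lam * eps) := by
  unfold pkdStep
  split_ifs with hneg hpos
  · nlinarith
  · nlinarith
  · exact absurd hi (not_lt.2 (abs_le.2 ⟨not_lt.1 hneg, not_lt.1 hpos⟩))

lemma dotProduct_pkdStep_le_neg_mul {N : ℕ} {lam eps : ℝ} (hlam : 0 ≤ lam) (heps : 0 ≤ eps)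
    {V : Fin N → ℝ} {i₀ : Fin N} (hi₀ : lam < |V i₀|) :
    V ⬝ᵥ pkdStep lam eps V ≤ -(lam * eps) :=
  calc V ⬝ᵥ pkdStep lam eps V ≤ ∑ i ∈ {i₀}, V i * pkdStep lam eps V i :=
        Finset.sum_le_sum_of_subset_of_nonpos' (Finset.subset_univ _)
          fun i _ _ => mul_pkdStep_nonpos hlam heps V i
    _ = V i₀ * pkdStep lam eps V i₀ := Finset.sum_singleton _ _
    _ ≤ -(lam * eps) := mul_pkdStep_le_neg_mul heps hi₀

lemma sub_apply_add_smul_of_affine {ι : Type*} [Fintype ι] {H : (ι → ℝ) → ℝ} {g : ι → ℝ}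
    {c : ℝ} (hH : ∀ θ, H θ = g ⬝ᵥ θ + c) (θ x : ι → ℝ) (t : ℝ) :
    H θ - H (θ + t • x) = -(t * g ⬝ᵥ x) := by
  rw [hH, hH, dotProduct_add, dotProduct_smul, smul_eq_mul]
  ring

/-- Multi-step descent guarantee of Theorem 3 in the affine case: if `H(θ) = g·θ + c`
with `‖g‖∞ > λ > 0`, then `K` PKD iterations decrease `H` by at least `K·λ·ε > 0`. -/
theorem pkd_multistep_descent {N : ℕ} (g : Fin N → ℝ) (lam eps c : ℝ)
    (hlam : 0 < lam) (heps : 0 < eps) (hg : ∃ i, lam < |g i|)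
    (K : ℕ) (hK : 0 < K)
    (H : (Fin N → ℝ) → ℝ) (hH : ∀ θ, H θ = (∑ i, g i * θ i) + c)
    (θ₀ : Fin N → ℝ) :
    H θ₀ - H (θ₀ + (K : ℝ) • pkdStep lam eps g) ≥ (K : ℝ) * lam * eps ∧
    (0 : ℝ) < (K : ℝ) * lam * eps := by
  refine ⟨?_, by positivity⟩
  obtain ⟨i₀, hi₀⟩ := hg
  have hstep : g ⬝ᵥ pkdStep lam eps g ≤ -(lam * eps) :=
    dotProduct_pkdStep_le_neg_mul hlam.le heps.le hi₀
  rw [sub_apply_add_smul_of_affine hH, ge_iff_le, mul_assoc, ← mul_neg]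
  exact mul_le_mul_of_nonneg_left (le_neg_of_le_neg hstep) (Nat.cast_nonneg K)
end

section
/- Let N be a natural number, g ∈ ℝ^N with ‖g‖∞ > λ for some λ > 0, ε > 0, L > 0, and K a positive natural number. Let H : ℝ^N → ℝ be the affine function H(θ) = g·θ + c, define the PKD step x*(g) ∈ ℝ^N coordinatewise by x*_i = ε if g_i < −λ, x*_i = −ε if g_i > λ, and x*_i = 0 if |g_i| ≤ λ, and set θ^k = θ^0 + k·x*(g) for k = 0, …, K. Let f : ℝ^N → ℝ be differentiable with ‖∇f(θ)‖∞ ≤ L for every θ with ‖θ − θ^0‖∞ ≤ K·ε. Set Δ = H(θ^0) − H(θ^K) and δ = |f(θ^K) − f(θ^0)|. Then Δ > 0 and Δ ≥ (λ/L)·δ. -/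
/-!
Every coordinate moved by the PKD step has `|g i| > λ` and moves by `ε` against the sign of
`g i`, so the affine objective drops by at least `λ ‖v‖₁`, where `v = K • x*(g)`; this is
positive since some `|g i| > λ`. The segment from `θ⁰` to `θ⁰ + v` stays in the `ℓ∞`-ball of
radius `K ε`, where the partial derivatives of `f` are bounded by `L`, so the mean value
inequality gives `δ ≤ L ‖v‖₁`. Dividing, `Δ / δ ≥ λ / L`.
-/

open Finset Set

theorem ContinuousLinearMap.abs_apply_le_of_abs_apply_single_le {ι : Type*} [Fintype ι]
    [DecidableEq ι] {φ : (ι → ℝ) →L[ℝ] ℝ} {L : ℝ} (h : ∀ i, |φ (Pi.single i 1)| ≤ L)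
    (v : ι → ℝ) : |φ v| ≤ L * ∑ i, |v i| := by
  have hφv : φ v = ∑ i, v i * φ (Pi.single i 1) := by
    conv_lhs => rw [← Finset.univ_sum_single v]
    simp only [map_sum]
    refine sum_congr rfl fun i _ => ?_
    rw [← smul_eq_mul, ← map_smul, ← Pi.single_smul', smul_eq_mul, mul_one]
  calc |φ v| ≤ ∑ i, |v i| * |φ (Pi.single i 1)| := by
        simp only [hφv, ← abs_mul]; exact abs_sum_le_sum_abs _ _
    _ ≤ ∑ i, |v i| * L := by gcongr with i; exact h i
    _ = L * ∑ i, |v i| := by rw [mul_sum]; simp only [mul_comm]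

theorem abs_sub_le_of_abs_partialDeriv_le {ι : Type*} [Fintype ι] [DecidableEq ι]
    {f : (ι → ℝ) → ℝ} (hf : Differentiable ℝ f) {θ v : ι → ℝ} {R L : ℝ}
    (hbound : ∀ y : ι → ℝ, (∀ i, |y i - θ i| ≤ R) → ∀ i, |fderiv ℝ f y (Pi.single i 1)| ≤ L)
    (hv : ∀ i, |v i| ≤ R) : |f (θ + v) - f θ| ≤ L * ∑ i, |v i| := by
  have hderiv : ∀ t ∈ Icc (0 : ℝ) 1,
      HasDerivWithinAt (fun t : ℝ => f (θ + t • v)) (fderiv ℝ f (θ + t • v) v) (Icc 0 1) t := by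
    intro t _
    have hline : HasDerivAt (fun t : ℝ => θ + t • v) v t := by
      simpa using ((hasDerivAt_id t).smul_const v).const_add θ
    exact ((hf _).hasFDerivAt.comp_hasDerivAt t hline).hasDerivWithinAt
  have hslope : ∀ t ∈ Ico (0 : ℝ) 1, ‖fderiv ℝ f (θ + t • v) v‖ ≤ L * ∑ i, |v i| := by
    rintro t ⟨ht₀, ht₁⟩
    refine ContinuousLinearMap.abs_apply_le_of_abs_apply_single_le (hbound _ fun i => ?_) v
    simp only [Pi.add_apply, Pi.smul_apply, smul_eq_mul, add_sub_cancel_left, abs_mul,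
      abs_of_nonneg ht₀]
    exact (mul_le_of_le_one_left (abs_nonneg _) ht₁.le).trans (hv i)
  simpa using norm_image_sub_le_of_norm_deriv_le_segment' hderiv hslope 1 (by simp)

section PkdStep

variable {N : ℕ} {lam eps : ℝ}

theorem abs_pkdStep_le (heps : 0 ≤ eps) (V : Fin N → ℝ) (i : Fin N) :
    |pkdStep lam eps V i| ≤ eps := by
  unfold pkdStep
  split_ifs <;> simp [abs_of_nonneg heps, heps]

theorem pkdStep_ne_zero (heps : eps ≠ 0) {V : Fin N → ℝ} {i : Fin N} (hi : lam < |V i|) :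
    pkdStep lam eps V i ≠ 0 := by
  unfold pkdStep
  split_ifs
  · exact heps
  · exact neg_ne_zero.mpr heps
  · rcases lt_abs.mp hi with h | h <;> linarith

theorem mul_abs_pkdStep_le (heps : 0 ≤ eps) (V : Fin N → ℝ) (i : Fin N) :
    lam * |pkdStep lam eps V i| ≤ -(V i * pkdStep lam eps V i) := by
  unfold pkdStep
  split_ifs
  · rw [abs_of_nonneg heps]; nlinarith
  · rw [abs_neg, abs_of_nonneg heps]; nlinarith
  · simp

theorem mul_sum_abs_smul_pkdStep_le {t : ℝ} (ht : 0 ≤ t) (heps : 0 ≤ eps) (V : Fin N → ℝ) :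
    lam * ∑ i, |(t • pkdStep lam eps V) i| ≤ -∑ i, V i * (t • pkdStep lam eps V) i := by
  rw [mul_sum, ← sum_neg_distrib]
  refine sum_le_sum fun i _ => ?_
  simp only [Pi.smul_apply, smul_eq_mul, abs_mul, abs_of_nonneg ht]
  nlinarith [mul_abs_pkdStep_le (lam := lam) heps V i]

theorem sum_abs_smul_pkdStep_pos {t : ℝ} (ht : 0 < t) (heps : 0 < eps) {V : Fin N → ℝ}
    (hV : ∃ i, lam < |V i|) : 0 < ∑ i, |(t • pkdStep lam eps V) i| := by
  obtain ⟨i, hi⟩ := hV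
  refine sum_pos' (fun _ _ => abs_nonneg _) ⟨i, mem_univ i, abs_pos.mpr ?_⟩
  exact smul_ne_zero ht.ne' (pkdStep_ne_zero heps.ne' hi)

theorem abs_smul_pkdStep_le {t : ℝ} (ht : 0 ≤ t) (heps : 0 ≤ eps) (V : Fin N → ℝ)
    (i : Fin N) : |(t • pkdStep lam eps V) i| ≤ t * eps := by
  rw [Pi.smul_apply, smul_eq_mul, abs_mul, abs_of_nonneg ht]
  exact mul_le_mul_of_nonneg_left (abs_pkdStep_le heps V i) ht

end PkdStep

theorem sub_eq_neg_sum_of_affine {ι : Type*} [Fintype ι] {H : (ι → ℝ) → ℝ} {g : ι → ℝ} {c : ℝ}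
    (hH : ∀ θ, H θ = (∑ i, g i * θ i) + c) (θ v : ι → ℝ) :
    H θ - H (θ + v) = -∑ i, g i * v i := by
  simp only [hH, Pi.add_apply, mul_add, sum_add_distrib]
  ring

/-- Exact instance of Theorem 3: with affine objective `H(θ) = g·θ + c`, `‖g‖∞ > λ > 0`,
and remaining knowledge `f` with gradient ℓ∞-bounded by `L` on the ℓ∞-ball of radius
`K·ε` around `θ⁰`, the descent `Δ = H(θ⁰) - H(θ^K)` of `K` PKD iterations satisfies
`Δ > 0` and `Δ ≥ (λ/L)·δ` where `δ = |f(θ^K) - f(θ⁰)|`. -/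
theorem pkd_principal_ratio_theorem {N : ℕ} (g : Fin N → ℝ) (lam eps c L : ℝ)
    (hlam : 0 < lam) (heps : 0 < eps) (hL : 0 < L) (hg : ∃ i, lam < |g i|)
    (K : ℕ) (hK : 0 < K)
    (H : (Fin N → ℝ) → ℝ) (hH : ∀ θ, H θ = (∑ i, g i * θ i) + c)
    (θ₀ : Fin N → ℝ)
    (f : (Fin N → ℝ) → ℝ) (hf : Differentiable ℝ f)
    (hgrad : ∀ θ : Fin N → ℝ, (∀ i, |θ i - θ₀ i| ≤ (K : ℝ) * eps) →
      ∀ i, |fderiv ℝ f θ (Pi.single i 1)| ≤ L) :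
    0 < H θ₀ - H (θ₀ + (K : ℝ) • pkdStep lam eps g) ∧
    H θ₀ - H (θ₀ + (K : ℝ) • pkdStep lam eps g) ≥
      (lam / L) * |f (θ₀ + (K : ℝ) • pkdStep lam eps g) - f θ₀| := by
  set v := (K : ℝ) • pkdStep lam eps g
  have hK₀ : (0 : ℝ) < K := Nat.cast_pos.mpr hK
  have hdescent : lam * ∑ i, |v i| ≤ H θ₀ - H (θ₀ + v) := by
    rw [sub_eq_neg_sum_of_affine hH]
    exact mul_sum_abs_smul_pkdStep_le hK₀.le heps.le g
  have hchange : |f (θ₀ + v) - f θ₀| ≤ L * ∑ i, |v i| :=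
    abs_sub_le_of_abs_partialDeriv_le hf hgrad (abs_smul_pkdStep_le hK₀.le heps.le g)
  have hstep : 0 < ∑ i, |v i| := sum_abs_smul_pkdStep_pos hK₀ heps hg
  refine ⟨(mul_pos hlam hstep).trans_le hdescent, ?_⟩
  calc (lam / L) * |f (θ₀ + v) - f θ₀| ≤ (lam / L) * (L * ∑ i, |v i|) := by gcongr
    _ = lam * ∑ i, |v i| := by field_simp
    _ ≤ H θ₀ - H (θ₀ + v) := hdescent
end
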